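/- arXiv:1010.1085 — 4 statements merged into one kernel-verified Lean document; each statement's English description precedes it below -/
import Mathlib

section
/- There do not exist real numbers λ ≠ 0, a ≠ 0 such that 108·e^{3at} + 62·aλ·e^{2at} - 14·a²λ²·e^{at} - 9·a³λ³ = 0 holds for all t in some nonempty open interval. -/
open Polynomial in
theorem no_identically_vanishing_exp_poly_I :
    ¬ ∃ (a lam : ℝ), a ≠ 0 ∧ lam ≠ 0 ∧ ∃ t0 t1 : ℝ, t0 < t1 ∧
      ∀ t ∈ Set.Ioo t0 t1,
        108 * Real.exp (3 * a * t) + 62 * a * lam * Real.exp (2 * a * t)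
          - 14 * a ^ 2 * lam ^ 2 * Real.exp (a * t) - 9 * a ^ 3 * lam ^ 3 = 0 := by
  rintro ⟨a, lam, ha, hlam, t0, t1, ht, hall⟩
  set p : ℝ[X] := C 108 * X ^ 3 + C (62 * a * lam) * X ^ 2
      - C (14 * a ^ 2 * lam ^ 2) * X - C (9 * a ^ 3 * lam ^ 3) with hp
  have hroot : ∀ t ∈ Set.Ioo t0 t1, p.IsRoot (Real.exp (a * t)) := by
    intro t htm
    have h := hall t htm
    have e3 : Real.exp (3 * a * t) = Real.exp (a * t) ^ 3 := by
      rw [← Real.exp_nat_mul]; ring_nf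
    have e2 : Real.exp (2 * a * t) = Real.exp (a * t) ^ 2 := by
      rw [← Real.exp_nat_mul]; ring_nf
    simp only [IsRoot, hp, eval_sub, eval_add, eval_mul, eval_pow, eval_C, eval_X]
    rw [← e3, ← e2]
    linarith
  have hinj : Set.InjOn (fun t => Real.exp (a * t)) (Set.Ioo t0 t1) := by
    intro x _ y _ hxy
    have := Real.exp_injective hxy
    exact mul_left_cancel₀ ha this
  have hinf : {x : ℝ | p.IsRoot x}.Infinite := by
    apply Set.Infinite.mono (s := (fun t => Real.exp (a * t)) '' Set.Ioo t0 t1)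
    · rintro x ⟨t, htm, rfl⟩; exact hroot t htm
    · exact Set.Infinite.image hinj (Set.Ioo_infinite ht)
  have hp0 : p = 0 := p.eq_zero_of_infinite_isRoot hinf
  have : p.coeff 3 = 108 := by
    simp only [hp, coeff_sub, coeff_add, coeff_C_mul, coeff_X_pow, coeff_X, coeff_C]
    norm_num
  rw [hp0] at this
  rw [coeff_zero] at this; norm_num at this
end

section
/- Let f(s) = as + b with a ≠ 0 and let g satisfy e^{2g}(g'' + g'²) = a²e^{-2g}(-g'' + g'²). Then f and g satisfy the type-I minimal surface equation -f''g'³ - e^{2g}(f''g' + f'g'² + f'g'') + e^{-2g}f'³(g'² - g'') = 0. -/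
theorem typeI_minimal_affine_f (J : Set ℝ) (a b : ℝ) (ha : a ≠ 0) (g : ℝ → ℝ)
    (hg : ∀ t ∈ J, DifferentiableAt ℝ g t)
    (hg' : ∀ t ∈ J, DifferentiableAt ℝ (deriv g) t)
    (hode : ∀ t ∈ J, Real.exp (2 * g t) * (deriv (deriv g) t + (deriv g t) ^ 2) =
      a ^ 2 * Real.exp (-(2 * g t)) * (-deriv (deriv g) t + (deriv g t) ^ 2)) :
    ∀ s : ℝ, ∀ t ∈ J,
      -(deriv (deriv (fun s => a * s + b)) s) * (deriv g t) ^ 3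
        - Real.exp (2 * g t) *
          (deriv (deriv (fun s => a * s + b)) s * deriv g t
            + deriv (fun s => a * s + b) s * (deriv g t) ^ 2
            + deriv (fun s => a * s + b) s * deriv (deriv g) t)
        + Real.exp (-(2 * g t)) * (deriv (fun s => a * s + b) s) ^ 3 *
          ((deriv g t) ^ 2 - deriv (deriv g) t) = 0 := by
  intro s t ht
  have h1 : deriv (fun s : ℝ => a * s + b) = fun _ => a := by
    ext x
    have h : HasDerivAt (fun s : ℝ => a * s + b) (a * 1) x :=
      ((hasDerivAt_id x).const_mul a).add_const b
    simpa using h.deriv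
  rw [h1]
  simp only []
  rw [deriv_const]
  have := hode t ht
  linear_combination (-a) * this
end

section
/- For the type-II minimal surface equation -f''g'³ + e^{-2g}(f'²(g''-g'²) - f''g') + e^{2g}(g''+g'²) = 0: if f is constant, then the equation holds if and only if g'' + g'² = 0; hence the solutions are g constant or g(t) = log|t+λ| + μ. -/
/-! For constant `f` all `f`-terms vanish and the equation reads `e^{2g} (g'' + g'²) = 0`.
Since `g'' + g'² = e^{-g} (e^g)''`, its solutions are those `g` with `e^g` affine, `e^g = a t + b`,
which is constant for `a = 0` and `|a| · |t + b/a|` otherwise. -/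

open Real

theorem Convex.exists_eq_mul_add_of_hasDerivAt {J : Set ℝ} (hJ : Convex ℝ J) {φ : ℝ → ℝ} {a : ℝ}
    (hφ : ∀ t ∈ J, HasDerivAt φ a t) : ∃ b, ∀ t ∈ J, φ t = a * t + b := by
  rcases J.eq_empty_or_nonempty with rfl | ⟨t₀, ht₀⟩
  · simp
  refine ⟨φ t₀ - a * t₀, fun t ht => ?_⟩
  have hψ : ∀ s ∈ J, HasDerivWithinAt (fun s => φ s - a * s) 0 J s := fun s hs => by
    have := ((hφ s hs).sub ((hasDerivAt_id' s).const_mul a)).hasDerivWithinAt (s := J)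
    rwa [mul_one, sub_self] at this
  have hconst := hJ.norm_image_sub_le_of_norm_hasDerivWithin_le (C := 0) hψ
    (fun _ _ => by simp) ht₀ ht
  rw [zero_mul, norm_le_zero_iff, sub_eq_zero] at hconst
  linarith

/-- `(e^g)'' = e^g (g'' + g'²)`; differentiating `e^g g'` rather than `deriv (e^g)` needs `g'`
to be differentiable only at the points of `J`. -/
theorem Convex.exists_exp_eq_mul_add_of_deriv_deriv_add_sq_eq_zero {J : Set ℝ}
    (hJ : Convex ℝ J) {g : ℝ → ℝ} (hg : ∀ t ∈ J, DifferentiableAt ℝ g t)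
    (hg' : ∀ t ∈ J, DifferentiableAt ℝ (deriv g) t)
    (h : ∀ t ∈ J, deriv (deriv g) t + deriv g t ^ 2 = 0) :
    ∃ a b, ∀ t ∈ J, exp (g t) = a * t + b := by
  have hexp : ∀ t ∈ J, HasDerivAt (fun s => exp (g s)) (exp (g t) * deriv g t) t :=
    fun t ht => (hg t ht).hasDerivAt.exp
  have hexp_mul_deriv : ∀ t ∈ J, HasDerivAt (fun s => exp (g s) * deriv g s) 0 t := fun t ht => by
    refine ((hexp t ht).mul (hg' t ht).hasDerivAt).congr_deriv ?_
    linear_combination exp (g t) * h t ht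
  obtain ⟨a, ha⟩ := hJ.exists_eq_mul_add_of_hasDerivAt hexp_mul_deriv
  refine ⟨a, hJ.exists_eq_mul_add_of_hasDerivAt fun t ht => ?_⟩
  simpa [ha t ht] using hexp t ht

theorem typeII_minimal_f_constant_general (J : Set ℝ)
    (hJconn : Convex ℝ J) (k : ℝ) (g : ℝ → ℝ)
    (hg : ∀ t ∈ J, DifferentiableAt ℝ g t)
    (hg' : ∀ t ∈ J, DifferentiableAt ℝ (deriv g) t) :
    ((∀ t ∈ J,
        -(deriv (deriv (fun _ : ℝ => k)) t) * (deriv g t) ^ 3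
          + Real.exp (-(2 * g t)) *
            ((deriv (fun _ : ℝ => k) t) ^ 2 * (deriv (deriv g) t - (deriv g t) ^ 2)
              - deriv (deriv (fun _ : ℝ => k)) t * deriv g t)
          + Real.exp (2 * g t) * (deriv (deriv g) t + (deriv g t) ^ 2) = 0)
      ↔ (∀ t ∈ J, deriv (deriv g) t + (deriv g t) ^ 2 = 0)) ∧
    ((∀ t ∈ J, deriv (deriv g) t + (deriv g t) ^ 2 = 0) →
      (∃ z0 : ℝ, ∀ t ∈ J, g t = z0) ∨
      (∃ lam mu : ℝ, ∀ t ∈ J, g t = Real.log |t + lam| + mu)) := by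
  refine ⟨?_, fun h => ?_⟩
  · simp [(exp_pos _).ne']
  obtain ⟨a, b, hab⟩ := hJconn.exists_exp_eq_mul_add_of_deriv_deriv_add_sq_eq_zero hg hg' h
  have hlog : ∀ t ∈ J, g t = log (a * t + b) := fun t ht => by rw [← hab t ht, log_exp]
  rcases eq_or_ne a 0 with rfl | ha
  · exact .inl ⟨log b, fun t ht => by simpa using hlog t ht⟩
  refine .inr ⟨b / a, log |a|, fun t ht => ?_⟩
  have hfactor : a * t + b = a * (t + b / a) := by field_simp
  have hne : t + b / a ≠ 0 := by
    intro hzero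
    have := exp_pos (g t)
    rw [hab t ht, hfactor, hzero, mul_zero] at this
    exact this.false
  rw [hlog t ht, ← log_abs, hfactor, abs_mul,
    log_mul (abs_ne_zero.2 ha) (abs_ne_zero.2 hne), add_comm]

theorem typeII_minimal_f_constant (J : Set ℝ) (hJopen : IsOpen J)
    (hJconn : Convex ℝ J) (hJne : J.Nonempty) (k : ℝ) (g : ℝ → ℝ)
    (hg : ∀ t ∈ J, DifferentiableAt ℝ g t)
    (hg' : ∀ t ∈ J, DifferentiableAt ℝ (deriv g) t) :
    ((∀ t ∈ J,
        -(deriv (deriv (fun _ : ℝ => k)) t) * (deriv g t) ^ 3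
          + Real.exp (-(2 * g t)) *
            ((deriv (fun _ : ℝ => k) t) ^ 2 * (deriv (deriv g) t - (deriv g t) ^ 2)
              - deriv (deriv (fun _ : ℝ => k)) t * deriv g t)
          + Real.exp (2 * g t) * (deriv (deriv g) t + (deriv g t) ^ 2) = 0)
      ↔ (∀ t ∈ J, deriv (deriv g) t + (deriv g t) ^ 2 = 0)) ∧
    ((∀ t ∈ J, deriv (deriv g) t + (deriv g t) ^ 2 = 0) →
      (∃ z0 : ℝ, ∀ t ∈ J, g t = z0) ∨
      (∃ lam mu : ℝ, ∀ t ∈ J, g t = Real.log |t + lam| + mu)) :=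
  typeII_minimal_f_constant_general J hJconn k g hg hg'
end

section
/- The functions g(t) = log|t| + μ (for any μ ∈ ℝ) and an arbitrary C² function f satisfy the type-III minimal surface equation: -e^{2(f+g)}(g''+g'²) + e^{-2g}(t²f'²g'² + f'² - t²f'²g'' - 3tf'²g' + tf''g' - f'') - 2f'²g'² + tf'²g'³ + tf''g'³ - f''g'² - f'²g'' = 0 on {t > 0}. -/
/-! With `g = log t + μ` one has `g' = 1/t` and `g'' = -1/t²`, so `g'' + g'² = 0` and the bracket
multiplying `e^{-2g}` vanishes as well; the remaining terms cancel, whatever `f` is. -/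

open Real

lemma deriv_log_add_const (mu : ℝ) : deriv (fun t : ℝ => log t + mu) = fun t => t⁻¹ := by
  funext t
  rw [deriv_add_const, deriv_log]

lemma deriv_deriv_log_add_const (mu t : ℝ) :
    deriv (deriv (fun t : ℝ => log t + mu)) t = -(t ^ 2)⁻¹ := by
  rw [deriv_log_add_const, deriv_inv]

theorem typeIII_minimal_log_g_general (mu : ℝ) (f : ℝ → ℝ) :
    ∀ s : ℝ, ∀ t : ℝ, 0 < t →
      -Real.exp (2 * (f s + (fun t => Real.log t + mu) t)) *
          (deriv (deriv (fun t => Real.log t + mu)) t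
            + (deriv (fun t => Real.log t + mu) t) ^ 2)
        + Real.exp (-(2 * (fun t => Real.log t + mu) t)) *
          (t ^ 2 * (deriv f s) ^ 2 * (deriv (fun t => Real.log t + mu) t) ^ 2
            + (deriv f s) ^ 2
            - t ^ 2 * (deriv f s) ^ 2 * deriv (deriv (fun t => Real.log t + mu)) t
            - 3 * t * (deriv f s) ^ 2 * deriv (fun t => Real.log t + mu) t
            + t * deriv (deriv f) s * deriv (fun t => Real.log t + mu) t
            - deriv (deriv f) s)
        - 2 * (deriv f s) ^ 2 * (deriv (fun t => Real.log t + mu) t) ^ 2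
        + t * (deriv f s) ^ 2 * (deriv (fun t => Real.log t + mu) t) ^ 3
        + t * deriv (deriv f) s * (deriv (fun t => Real.log t + mu) t) ^ 3
        - deriv (deriv f) s * (deriv (fun t => Real.log t + mu) t) ^ 2
        - (deriv f s) ^ 2 * deriv (deriv (fun t => Real.log t + mu)) t = 0 := by
  intro s t ht
  rw [deriv_deriv_log_add_const, deriv_log_add_const]
  field_simp
  ring

theorem typeIII_minimal_log_g (mu : ℝ) (f : ℝ → ℝ)
    (hf : Differentiable ℝ f) (hf' : Differentiable ℝ (deriv f)) :
    ∀ s : ℝ, ∀ t : ℝ, 0 < t →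
      -Real.exp (2 * (f s + (fun t => Real.log t + mu) t)) *
          (deriv (deriv (fun t => Real.log t + mu)) t
            + (deriv (fun t => Real.log t + mu) t) ^ 2)
        + Real.exp (-(2 * (fun t => Real.log t + mu) t)) *
          (t ^ 2 * (deriv f s) ^ 2 * (deriv (fun t => Real.log t + mu) t) ^ 2
            + (deriv f s) ^ 2
            - t ^ 2 * (deriv f s) ^ 2 * deriv (deriv (fun t => Real.log t + mu)) t
            - 3 * t * (deriv f s) ^ 2 * deriv (fun t => Real.log t + mu) t
            + t * deriv (deriv f) s * deriv (fun t => Real.log t + mu) t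
            - deriv (deriv f) s)
        - 2 * (deriv f s) ^ 2 * (deriv (fun t => Real.log t + mu) t) ^ 2
        + t * (deriv f s) ^ 2 * (deriv (fun t => Real.log t + mu) t) ^ 3
        + t * deriv (deriv f) s * (deriv (fun t => Real.log t + mu) t) ^ 3
        - deriv (deriv f) s * (deriv (fun t => Real.log t + mu) t) ^ 2
        - (deriv f s) ^ 2 * deriv (deriv (fun t => Real.log t + mu)) t = 0 :=
  typeIII_minimal_log_g_general mu f
end
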